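/- Let T > 1 be real and let d_1, …, d_K be real numbers with d_k ≥ 1 for all k and satisfying d_ℓ/d_k ≥ (1+1/T)^(ℓ−k−1) whenever k < ℓ. Then the integral over t from 0 to T of |Σ_{k=1}^K d_k^{it}|² dt is at most 11·K·T·(1 + log K), provided T is sufficiently large. -/

import Mathlib

open Complex intervalIntegral

private lemma stmt5_norm_exp (t θ : ℝ) : ‖Complex.exp (Complex.I * t * θ)‖ = 1 := by
  rw [Complex.norm_exp]; simp [Complex.mul_re]

private lemma stmt5_int_le_T (T θ : ℝ) (hT : 0 ≤ T) :
    ‖∫ t in (0:ℝ)..T, Complex.exp (Complex.I * t * θ)‖ ≤ T := by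
  have := intervalIntegral.norm_integral_le_of_norm_le_const (a := (0:ℝ)) (b := T) (C := 1)
    (f := fun t : ℝ => Complex.exp (Complex.I * t * θ)) ?_
  · simpa [_root_.abs_of_nonneg hT] using this
  · intro x _; rw [stmt5_norm_exp]

private lemma stmt5_int_le_theta (T θ : ℝ) (hθ : θ ≠ 0) :
    ‖∫ t in (0:ℝ)..T, Complex.exp (Complex.I * t * θ)‖ ≤ 2 / |θ| := by
  have hc : (θ : ℂ) * Complex.I ≠ 0 := by
    simp [Complex.ofReal_ne_zero, hθ, Complex.I_ne_zero]
  have e : ∀ t : ℝ, Complex.I * t * θ = ((θ:ℂ) * Complex.I) * t := by intro t; ring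
  simp_rw [e]
  rw [integral_exp_mul_complex hc, norm_div]
  have h1 : ‖Complex.exp ((θ:ℂ) * Complex.I * T)‖ = 1 := by
    rw [Complex.norm_exp]; simp [Complex.mul_re]
  have h2 : ‖((θ:ℂ) * Complex.I)‖ = |θ| := by
    simp
  rw [h2]
  gcongr
  calc ‖Complex.exp ((θ:ℂ)*Complex.I*T) - Complex.exp ((θ:ℂ)*Complex.I*((0:ℝ):ℂ))‖
      ≤ ‖Complex.exp ((θ:ℂ)*Complex.I*T)‖ + ‖Complex.exp ((θ:ℂ)*Complex.I*((0:ℝ):ℂ))‖ :=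
        norm_sub_le _ _
    _ ≤ 2 := by rw [h1]; norm_num

private lemma stmt5_harm : ∀ n : ℕ, ∑ i ∈ Finset.range n, (1:ℝ)/(i+1) ≤ 1 + Real.log n := by
  intro n
  induction n with
  | zero => simp
  | succ n ih =>
    rcases Nat.eq_zero_or_pos n with rfl | hn
    · norm_num
    rw [Finset.sum_range_succ]
    have hn' : (0:ℝ) < n := by exact_mod_cast hn
    have key : (1:ℝ)/((n:ℝ)+1) ≤ Real.log ((n:ℝ)+1) - Real.log ((n:ℝ)) := by
      rw [← Real.log_div (by positivity) (by positivity)]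
      have h := Real.one_sub_inv_le_log_of_pos (x := ((n:ℝ)+1)/((n:ℝ))) (by positivity)
      refine le_trans ?_ h
      rw [inv_div]
      have e : 1 - ((n:ℝ))/((n:ℝ)+1) = 1/((n:ℝ)+1) := by field_simp; ring
      rw [e]
    push_cast
    linarith [ih, key]

private lemma stmt5_expand (t : ℝ) (L : ℕ → ℝ) (K : ℕ) :
    ‖∑ k ∈ Finset.range K, Complex.exp (Complex.I * t * (L k))‖ ^ 2
      = ∑ k ∈ Finset.range K, ∑ l ∈ Finset.range K,
          (Complex.exp (Complex.I * t * ((L k) - (L l)))).re := by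
  have hz : ∀ z : ℂ, ‖z‖^2 = (z * (starRingEnd ℂ) z).re := by
    intro z
    rw [Complex.mul_conj, Complex.ofReal_re, Complex.normSq_eq_norm_sq]
  rw [hz, map_sum, Finset.sum_mul_sum, Complex.re_sum]
  refine Finset.sum_congr rfl fun k _ => ?_
  rw [Complex.re_sum]
  refine Finset.sum_congr rfl fun l _ => ?_
  congr 1
  rw [← Complex.exp_conj, ← Complex.exp_add]
  congr 1
  rw [map_mul, map_mul, Complex.conj_I, Complex.conj_ofReal, Complex.conj_ofReal]
  push_cast
  ring

private lemma stmt5_re_le (T θ : ℝ) :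
    (∫ t in (0:ℝ)..T, (Complex.exp (Complex.I * t * θ)).re)
      ≤ ‖∫ t in (0:ℝ)..T, Complex.exp (Complex.I * t * θ)‖ := by
  have hcont : Continuous fun t : ℝ => Complex.exp (Complex.I * t * θ) := by fun_prop
  have hcc := Complex.reCLM.intervalIntegral_comp_comm
    (μ := MeasureTheory.volume) (a := 0) (b := T) (hcont.intervalIntegrable 0 T)
  rw [show (∫ t in (0:ℝ)..T, (Complex.exp (Complex.I * t * θ)).re)
      = (∫ t in (0:ℝ)..T, Complex.exp (Complex.I * t * θ)).re from hcc]
  exact Complex.re_le_norm _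

set_option maxHeartbeats 2000000 in
theorem stmt_5 :
    ∃ T₀ : ℝ, ∀ T : ℝ, T₀ ≤ T → 1 < T → ∀ K : ℕ, ∀ d : ℕ → ℝ,
      (∀ k < K, 1 ≤ d k) →
      (∀ k < K, ∀ ℓ < K, k < ℓ → d ℓ / d k ≥ (1 + 1 / T) ^ (ℓ - k - 1)) →
      (∫ t in (0:ℝ)..T,
          ‖∑ k ∈ Finset.range K, Complex.exp (Complex.I * t * Real.log (d k))‖ ^ 2)
        ≤ 11 * K * T * (1 + Real.log K) := by
  use 2
  intro T hT2 hT1 K d hd hsep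
  have hT0 : (0:ℝ) < T := by linarith
  set L : ℕ → ℝ := fun k => Real.log (d k) with hLdef
  -- bound function for pairs at distance j
  set h : ℕ → ℝ := fun j => if j ≤ 1 then T else 4 * T / ((j:ℝ) - 1) with hhdef
  have hpos : ∀ j, 0 ≤ h j := by
    intro j
    simp only [hhdef]
    split
    · linarith
    · next hj =>
      have h2 : (2:ℝ) ≤ (j:ℝ) := by exact_mod_cast Nat.not_le.mp hj
      have h3 : (0:ℝ) < (j:ℝ) - 1 := by linarith
      positivity
  -- continuity / integrability
  have hcont : ∀ θ : ℝ, Continuous fun t : ℝ => Complex.exp (Complex.I * t * θ) := by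
    intro θ; fun_prop
  have hint : ∀ θ : ℝ, IntervalIntegrable
      (fun t : ℝ => (Complex.exp (Complex.I * t * θ)).re) MeasureTheory.volume 0 T :=
    fun θ => (Complex.continuous_re.comp (hcont θ)).intervalIntegrable 0 T
  -- log separation
  have hlog : 1/(2*T) ≤ Real.log (1 + 1/T) := by
    have h1 : (0:ℝ) < 1 + 1/T := by positivity
    have h2 := Real.one_sub_inv_le_log_of_pos h1
    have e : 1 - (1+1/T)⁻¹ = 1/(T+1) := by
      rw [inv_eq_one_div]
      field_simp; ring
    rw [e] at h2
    refine le_trans ?_ h2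
    rw [div_le_div_iff₀ (by linarith) (by linarith)]
    linarith
  have sep' : ∀ k l : ℕ, k < l → l < K →
      ((l - k - 1 : ℕ):ℝ) * (1/(2*T)) ≤ L l - L k := by
    intro k l hkl hlK
    have hdk : (0:ℝ) < d k := lt_of_lt_of_le one_pos (hd k (hkl.trans hlK))
    have hdl : (0:ℝ) < d l := lt_of_lt_of_le one_pos (hd l hlK)
    have hs := hsep k (hkl.trans hlK) l hlK hkl
    have h1 : ((l - k - 1 : ℕ):ℝ) * Real.log (1+1/T) ≤ Real.log (d l / d k) := by
      rw [← Real.log_pow]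
      exact Real.log_le_log (by positivity) hs
    have h2 : Real.log (d l / d k) = L l - L k := Real.log_div (ne_of_gt hdl) (ne_of_gt hdk)
    calc ((l - k - 1 : ℕ):ℝ) * (1/(2*T))
        ≤ ((l - k - 1 : ℕ):ℝ) * Real.log (1+1/T) := by
          exact mul_le_mul_of_nonneg_left hlog (Nat.cast_nonneg _)
      _ ≤ Real.log (d l / d k) := h1
      _ = L l - L k := h2
  have habs : ∀ k, k < K → ∀ l, l < K → k ≠ l →
      ((Nat.dist k l - 1 : ℕ):ℝ) * (1/(2*T)) ≤ |L k - L l| := by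
    intro k hk l hl hne
    rcases lt_or_gt_of_ne hne with hlt | hgt
    · have := sep' k l hlt hl
      have hdist : Nat.dist k l = l - k := by simp [Nat.dist]; omega
      rw [hdist]
      calc ((l - k - 1 : ℕ):ℝ) * (1/(2*T)) ≤ L l - L k := this
        _ ≤ |L l - L k| := le_abs_self _
        _ = |L k - L l| := abs_sub_comm _ _
    · have := sep' l k hgt hk
      have hdist : Nat.dist k l = k - l := by simp [Nat.dist]; omega
      rw [hdist]
      exact le_trans this (le_abs_self _)
  -- per-pair bound
  have pair : ∀ k, k < K → ∀ l, l < K →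
      (∫ t in (0:ℝ)..T, (Complex.exp (Complex.I * t * ((L k) - (L l)))).re)
        ≤ h (Nat.dist k l) := by
    intro k hk l hl
    simp only [← Complex.ofReal_sub]
    by_cases hkl : k = l
    · subst hkl
      have : ∀ t : ℝ, (Complex.exp (Complex.I * t * ((L k - L k : ℝ) : ℂ))).re = 1 := by
        intro t; simp
      rw [intervalIntegral.integral_congr (g := fun _ => (1:ℝ)) (fun t _ => this t)]
      simp [Nat.dist_self, hhdef]
    · have hre := stmt5_re_le T ((L k) - (L l))
      have hd1 : 1 ≤ Nat.dist k l := by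
        have := Nat.dist_pos_of_ne hkl
        omega
      by_cases hd2 : Nat.dist k l ≤ 1
      · refine le_trans hre ?_
        have : h (Nat.dist k l) = T := by simp [hhdef, hd2]
        rw [this]
        exact stmt5_int_le_T T _ (le_of_lt hT0)
      · -- distance at least 2
        have hdge : 2 ≤ Nat.dist k l := by omega
        set g := Nat.dist k l with hg
        have hc1 : (1:ℝ) ≤ ((g - 1 : ℕ):ℝ) := by
          have : 1 ≤ g - 1 := by omega
          exact_mod_cast this
        have hab := habs k hk l hl hkl
        have habspos : (0:ℝ) < |L k - L l| := by
          calc (0:ℝ) < ((g - 1 : ℕ):ℝ) * (1/(2*T)) := by positivity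
            _ ≤ |L k - L l| := hab
        have hθ : (L k) - (L l) ≠ 0 := by
          intro hc; rw [hc] at habspos; simp at habspos
        refine le_trans hre (le_trans (stmt5_int_le_theta T _ hθ) ?_)
        have hhg : h g = 4 * T / ((g:ℝ) - 1) := by
          simp [hhdef]
          omega
        rw [hhg]
        have hcast : ((g - 1 : ℕ):ℝ) = (g:ℝ) - 1 := by
          have h1g : 1 ≤ g := by omega
          rw [Nat.cast_sub h1g, Nat.cast_one]
        calc 2 / |L k - L l| ≤ 2 / (((g - 1 : ℕ):ℝ) * (1/(2*T))) := by
              apply div_le_div_of_nonneg_left (by norm_num) (by positivity) hab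
          _ = 4 * T / ((g:ℝ) - 1) := by
              rw [hcast]
              field_simp
              ring
  -- inner sum bound
  have inner : ∀ k, k < K → (∑ l ∈ Finset.range K, h (Nat.dist k l))
      ≤ 2 * ∑ j ∈ Finset.range K, h j := by
    intro k hk
    have split : Finset.range K = Finset.range (k+1) ∪ Finset.Ico (k+1) K := by
      rw [Finset.range_eq_Ico, Finset.range_eq_Ico, Finset.Ico_union_Ico_eq_Ico (by omega) (by omega)]
    have hdisj : Disjoint (Finset.range (k+1)) (Finset.Ico (k+1) K) := by
      simp [Finset.disjoint_left]
      intro a ha; omega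
    conv_lhs => rw [split, Finset.sum_union hdisj]
    have e1 : ∑ l ∈ Finset.range (k+1), h (Nat.dist k l)
        = ∑ j ∈ Finset.range (k+1), h j := by
      rw [← Finset.sum_range_reflect (fun l => h (Nat.dist k l)) (k+1)]
      refine Finset.sum_congr rfl fun j hj => ?_
      have hj' : j ≤ k := Nat.lt_succ_iff.mp (Finset.mem_range.mp hj)
      congr 1
      simp only [Nat.dist]
      omega
    have e2 : ∑ l ∈ Finset.Ico (k+1) K, h (Nat.dist k l) ≤ ∑ j ∈ Finset.range K, h j := by
      have e : ∑ l ∈ Finset.Ico (k+1) K, h (Nat.dist k l) = ∑ j ∈ Finset.Ico 1 (K - k), h j := by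
        rw [Finset.sum_Ico_eq_sum_range, Finset.sum_Ico_eq_sum_range]
        refine Finset.sum_congr (by rw [Nat.sub_sub]) fun i _ => ?_
        congr 1
        simp only [Nat.dist]
        omega
      rw [e]
      refine Finset.sum_le_sum_of_subset_of_nonneg ?_ (fun j _ _ => hpos j)
      intro j hj
      simp only [Finset.mem_Ico, Finset.mem_range] at hj ⊢
      omega
    have e3 : ∑ j ∈ Finset.range (k+1), h j ≤ ∑ j ∈ Finset.range K, h j := by
      refine Finset.sum_le_sum_of_subset_of_nonneg ?_ (fun j _ _ => hpos j)
      intro j hj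
      simp only [Finset.mem_range] at hj ⊢
      omega
    rw [e1]
    linarith [e2, e3]
  -- final numeric bound on 2 * sum h
  have hsum : (2:ℝ) * ∑ j ∈ Finset.range K, h j ≤ 11 * T * (1 + Real.log K) := by
    match K with
    | 0 => simp; positivity
    | 1 =>
      simp [hhdef]
      have : Real.log 1 = 0 := Real.log_one
      nlinarith [hT0]
    | (m+2) =>
      have hK2 : (2:ℝ) ≤ ((m+2:ℕ):ℝ) := by exact_mod_cast Nat.le_add_left 2 m
      have hlogK : Real.log 2 ≤ Real.log ((m+2:ℕ):ℝ) :=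
        Real.log_le_log (by norm_num) hK2
      have hlog2 : (0.6931471803:ℝ) < Real.log 2 := Real.log_two_gt_d9
      have hsplit : ∑ j ∈ Finset.range (m+2), h j
          = h 0 + h 1 + ∑ i ∈ Finset.range m, h (i+2) := by
        rw [Finset.sum_range_succ', Finset.sum_range_succ']
        simp only [show ∀ i : ℕ, i + 1 + 1 = i + 2 from fun i => by omega, Nat.zero_add]
        ring
      have hh0 : h 0 = T := by simp [hhdef]
      have hh1 : h 1 = T := by simp [hhdef]
      have hhi : ∀ i : ℕ, h (i+2) = 4 * T * (1/((i:ℝ)+1)) := by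
        intro i
        simp [hhdef]
        rw [show ((i:ℝ) + 2) - 1 = (i:ℝ) + 1 by ring]
        ring
      have htail : ∑ i ∈ Finset.range m, h (i+2) ≤ 4 * T * (1 + Real.log ((m+2:ℕ):ℝ)) := by
        calc ∑ i ∈ Finset.range m, h (i+2)
            = 4 * T * ∑ i ∈ Finset.range m, (1/((i:ℝ)+1)) := by
              rw [Finset.mul_sum]
              exact Finset.sum_congr rfl fun i _ => hhi i
          _ ≤ 4 * T * (1 + Real.log m) := by
              have := stmt5_harm m
              nlinarith [hT0]
          _ ≤ 4 * T * (1 + Real.log ((m+2:ℕ):ℝ)) := by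
              have hm : Real.log (m:ℝ) ≤ Real.log ((m+2:ℕ):ℝ) := by
                rcases Nat.eq_zero_or_pos m with rfl | hm
                · norm_num [Real.log_zero]
                  exact Real.log_nonneg (by norm_num)
                · apply Real.log_le_log (by exact_mod_cast hm)
                  push_cast; linarith
              nlinarith [hT0]
      have hlogKpos : (0.34:ℝ) ≤ Real.log ((m+2:ℕ):ℝ) := by nlinarith
      rw [hsplit, hh0, hh1]
      nlinarith [hT0, htail, hlogKpos]
  -- assemble
  calc (∫ t in (0:ℝ)..T,
          ‖∑ k ∈ Finset.range K, Complex.exp (Complex.I * t * Real.log (d k))‖ ^ 2)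
      = ∫ t in (0:ℝ)..T, ∑ k ∈ Finset.range K, ∑ l ∈ Finset.range K,
          (Complex.exp (Complex.I * t * ((L k) - (L l)))).re := by
        refine intervalIntegral.integral_congr fun t _ => ?_
        exact stmt5_expand t L K
    _ = ∑ k ∈ Finset.range K, ∑ l ∈ Finset.range K,
          ∫ t in (0:ℝ)..T, (Complex.exp (Complex.I * t * ((L k) - (L l)))).re := by
        have hint2 : ∀ k l : ℕ, IntervalIntegrable
            (fun t : ℝ => (Complex.exp (Complex.I * t * ((L k : ℂ) - (L l : ℂ)))).re)
            MeasureTheory.volume 0 T := by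
          intro k l
          apply Continuous.intervalIntegrable
          fun_prop
        have hint3 : ∀ k : ℕ, IntervalIntegrable
            (fun t : ℝ => ∑ l ∈ Finset.range K,
              (Complex.exp (Complex.I * t * ((L k : ℂ) - (L l : ℂ)))).re)
            MeasureTheory.volume 0 T := by
          intro k
          have hs := IntervalIntegrable.sum (μ := MeasureTheory.volume) (a := (0:ℝ)) (b := T)
            (f := fun l (t : ℝ) => (Complex.exp (Complex.I * t * ((L k : ℂ) - (L l : ℂ)))).re)
            (Finset.range K) (fun l _ => hint2 k l)
          have e : (∑ l ∈ Finset.range K,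
              fun t : ℝ => (Complex.exp (Complex.I * t * ((L k : ℂ) - (L l : ℂ)))).re)
              = fun t : ℝ => ∑ l ∈ Finset.range K,
                  (Complex.exp (Complex.I * t * ((L k : ℂ) - (L l : ℂ)))).re := by
            funext t
            exact Finset.sum_apply t _ _
          rwa [e] at hs
        have A := intervalIntegral.integral_finset_sum (μ := MeasureTheory.volume)
          (a := (0:ℝ)) (b := T) (s := Finset.range K)
          (f := fun k (t : ℝ) => ∑ l ∈ Finset.range K,
            (Complex.exp (Complex.I * t * ((L k : ℂ) - (L l : ℂ)))).re)
          (fun k _ => hint3 k)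
        exact A.trans (Finset.sum_congr rfl fun k _ =>
          intervalIntegral.integral_finset_sum (fun l _ => hint2 k l))
    _ ≤ ∑ k ∈ Finset.range K, ∑ l ∈ Finset.range K, h (Nat.dist k l) := by
        refine Finset.sum_le_sum fun k hk => Finset.sum_le_sum fun l hl => ?_
        exact pair k (Finset.mem_range.mp hk) l (Finset.mem_range.mp hl)
    _ ≤ ∑ k ∈ Finset.range K, (2 * ∑ j ∈ Finset.range K, h j) := by
        refine Finset.sum_le_sum fun k hk => inner k (Finset.mem_range.mp hk)
    _ = (K:ℝ) * (2 * ∑ j ∈ Finset.range K, h j) := by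
        rw [Finset.sum_const, Finset.card_range, nsmul_eq_mul]
    _ ≤ (K:ℝ) * (11 * T * (1 + Real.log K)) := by
        exact mul_le_mul_of_nonneg_left hsum (Nat.cast_nonneg _)
    _ = 11 * K * T * (1 + Real.log K) := by ring
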